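/- Let w, w′ ∈ Sₙ and k, m positive integers. Then w →_{r[k,m]} w′ if and only if there is a path w = w⁽⁰⁾, w⁽¹⁾, …, w⁽ᵐ⁾ = w′ of length m in the k-Bruhat order (with w⁽ⁱ⁾ = w⁽ⁱ⁻¹⁾·t_{aᵢ,bᵢ}, aᵢ ≤ k < bᵢ, ℓ(w⁽ⁱ⁾) = ℓ(w⁽ⁱ⁻¹⁾)+1) whose labels are strictly increasing: w⁽¹⁾(a₁) < w⁽²⁾(a₂) < ⋯ < w⁽ᵐ⁾(a_m). Moreover, such a path, when it exists, is unique. -/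

import Mathlib

open Equiv MvPolynomial

attribute [local instance] Classical.propDecidable

namespace SchubertPieri

/-- Position `j ∈ {1,…,N}` (1-indexed) as an element of `Fin N` (0-indexed). -/
def pos (N : ℕ) [NeZero N] (j : ℕ) : Fin N :=
  ⟨(j - 1) % N, Nat.mod_lt _ (Nat.pos_of_ne_zero (NeZero.ne N))⟩

/-- The transposition `t_{a,b}` interchanging positions `a` and `b` (1-indexed). -/
def t (N : ℕ) [NeZero N] (a b : ℕ) : Equiv.Perm (Fin N) :=
  Equiv.swap (pos N a) (pos N b)

/-- The value `w(j)` for `j ∈ {1,…,N}` (1-indexed). -/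
def val {N : ℕ} [NeZero N] (w : Equiv.Perm (Fin N)) (j : ℕ) : ℕ :=
  (w (pos N j) : ℕ) + 1

/-- The length of `w`: its number of inversions. -/
def len {N : ℕ} (w : Equiv.Perm (Fin N)) : ℕ :=
  (Finset.univ.filter fun p : Fin N × Fin N => p.1 < p.2 ∧ w p.2 < w p.1).card

/-- The longest permutation `w₀ : j ↦ N+1-j`. -/
def w0 (N : ℕ) : Equiv.Perm (Fin N) :=
  ⟨Fin.rev, Fin.rev, Fin.rev_rev, Fin.rev_rev⟩

/-- The product `t_{a 0, b 0} ⋯ t_{a (i-1), b (i-1)}`. -/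
def tProd (N : ℕ) [NeZero N] (a b : ℕ → ℕ) (i : ℕ) : Equiv.Perm (Fin N) :=
  ((List.range i).map fun j => t N (a j) (b j)).prod

/-- `r[k,m] = t_{k,k+1} t_{k,k+2} ⋯ t_{k,k+m}`, the (m+1)-cycle with
`r[k,m](k) = k+m` and `r[k,m](j) = j-1` for `k+1 ≤ j ≤ k+m`. -/
def rPerm (N k m : ℕ) [NeZero N] : Equiv.Perm (Fin N) :=
  ((List.range m).map fun i => t N k (k + 1 + i)).prod

/-- `c[k,m] = t_{k,k+1} t_{k-1,k+1} ⋯ t_{k-m+1,k+1}`, the (m+1)-cycle with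
`c[k,m](j) = j+1` for `k-m+1 ≤ j ≤ k` and `c[k,m](k+1) = k-m+1`. -/
def cPerm (N k m : ℕ) [NeZero N] : Equiv.Perm (Fin N) :=
  ((List.range m).map fun i => t N (k - i) (k + 1)).prod

/-- The conditions that `aᵢ ≤ k < bᵢ` (with all indices in `{1,…,N}`) and that
`ℓ(w t_{a₁ b₁} ⋯ t_{aᵢ bᵢ}) = ℓ(w) + i` for `1 ≤ i ≤ m`. -/
def StepOK (N k m : ℕ) [NeZero N] (w : Equiv.Perm (Fin N)) (a b : ℕ → ℕ) : Prop :=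
  (∀ i, i < m → 1 ≤ a i ∧ a i ≤ k ∧ k < b i ∧ b i ≤ N) ∧
  (∀ i, i ≤ m → len (w * tProd N a b i) = len w + i)

/-- `w →_{r[k,m]} w'`. -/
def RelR (N k m : ℕ) [NeZero N] (w w' : Equiv.Perm (Fin N)) : Prop :=
  ∃ a b : ℕ → ℕ, StepOK N k m w a b ∧ w' = w * tProd N a b m ∧
    (∀ i j, i < m → j < m → i ≠ j → b i ≠ b j)

/-- `w →_{c[k,m]} w'`. -/
def RelC (N k m : ℕ) [NeZero N] (w w' : Equiv.Perm (Fin N)) : Prop :=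
  ∃ a b : ℕ → ℕ, StepOK N k m w a b ∧ w' = w * tProd N a b m ∧
    (∀ i j, i < m → j < m → i ≠ j → a i ≠ a j)

/-- The divided difference operator `∂ᵢ f = (f - sᵢ·f)/(xᵢ - xᵢ₊₁)` (1-indexed `i`);
the quotient is exact, and is recovered here as the (unique) witness of divisibility. -/
noncomputable def divDiff {N : ℕ} [NeZero N] (i : ℕ) (f : MvPolynomial (Fin N) ℤ) :
    MvPolynomial (Fin N) ℤ :=
  if h : (X (pos N i) - X (pos N (i + 1))) ∣ (f - rename (⇑(t N i (i + 1))) f) then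
    h.choose
  else 0

/-- `∂_{a₁} ∘ ⋯ ∘ ∂_{a_p}` applied to `f`, for a word `l = [a₁,…,a_p]`. -/
noncomputable def divDiffWord {N : ℕ} [NeZero N] (l : List ℕ) (f : MvPolynomial (Fin N) ℤ) :
    MvPolynomial (Fin N) ℤ :=
  l.foldr divDiff f

/-- Auxiliary: produce a reduced word for `w` by repeatedly removing a descent. -/
def redWordAux (N : ℕ) [NeZero N] : ℕ → Equiv.Perm (Fin N) → List ℕ
  | 0, _ => []
  | fuel + 1, w =>
    match ((List.range (N - 1)).map (· + 1)).find? (fun i => decide (val w (i + 1) < val w i)) with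
    | none => []
    | some i => redWordAux N fuel (w * t N i (i + 1)) ++ [i]

/-- A canonical reduced word `(a₁,…,a_p)` for `w`, i.e. `w = s_{a₁} ⋯ s_{a_p}` with `p = ℓ(w)`. -/
def redWord (N : ℕ) [NeZero N] (w : Equiv.Perm (Fin N)) : List ℕ :=
  redWordAux N (N * N) w

/-- The staircase monomial `x₁^{N-1} x₂^{N-2} ⋯ x_{N-1}`. -/
noncomputable def staircase (N : ℕ) : MvPolynomial (Fin N) ℤ :=
  ∏ i : Fin N, X i ^ (N - 1 - (i : ℕ))

/-- The Schubert polynomial `𝔖_w = ∂_{w⁻¹w₀}(x₁^{N-1} ⋯ x_{N-1})`. -/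
noncomputable def schubertPoly (N : ℕ) [NeZero N] (w : Equiv.Perm (Fin N)) :
    MvPolynomial (Fin N) ℤ :=
  divDiffWord (redWord N (w⁻¹ * w0 N)) (staircase N)

/-- The ideal of `Rₙ` generated by the symmetric polynomials with zero constant term. -/
noncomputable def symIdeal (N : ℕ) : Ideal (MvPolynomial (Fin N) ℤ) :=
  Ideal.span {f : MvPolynomial (Fin N) ℤ | f.IsSymmetric ∧ constantCoeff f = 0}

/-- The ring `Hₙ = Rₙ/𝒮`. -/
abbrev HRing (N : ℕ) := MvPolynomial (Fin N) ℤ ⧸ symIdeal N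

/-- The class of the Schubert polynomial `𝔖_w` in `Hₙ`. -/
noncomputable def SS (N : ℕ) [NeZero N] (w : Equiv.Perm (Fin N)) : HRing N :=
  Ideal.Quotient.mk (symIdeal N) (schubertPoly N w)

/-- The complete homogeneous symmetric polynomial of degree `m` in `x₁,…,x_k`. -/
noncomputable def hPoly (N k m : ℕ) : MvPolynomial (Fin N) ℤ :=
  ∑ s ∈ (Finset.univ.filter fun i : Fin N => (i : ℕ) < k).sym m,
    (Multiset.map X (s : Multiset (Fin N))).prod

/-- The elementary symmetric polynomial of degree `m` in `x₁,…,x_k`. -/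
noncomputable def ePoly (N k m : ℕ) : MvPolynomial (Fin N) ℤ :=
  ∑ s ∈ (Finset.univ.filter fun i : Fin N => (i : ℕ) < k).powersetCard m, ∏ i ∈ s, X i

/-- Covering relation of the `k`-Bruhat order. -/
def kCover (N k : ℕ) [NeZero N] (w w' : Equiv.Perm (Fin N)) : Prop :=
  ∃ a b : ℕ, 1 ≤ a ∧ a ≤ k ∧ k < b ∧ b ≤ N ∧ w' = w * t N a b ∧ len w' = len w + 1

/-- The (strict) `k`-Bruhat order `<ₖ`. -/
def kBruhat (N k : ℕ) [NeZero N] : Equiv.Perm (Fin N) → Equiv.Perm (Fin N) → Prop :=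
  Relation.TransGen (kCover N k)

/-- The label `w⁽ⁱ⁺¹⁾(a_{i+1})` (0-indexed `i`) of the `(i+1)`-st step of a path. -/
def label {N : ℕ} [NeZero N] (w : Equiv.Perm (Fin N)) (a b : ℕ → ℕ) (i : ℕ) : ℕ :=
  val (w * tProd N a b (i + 1)) (a i)

/-- `(a,b)` encodes a path of length `m` in the `k`-Bruhat order from `w` to `w'`
(normalized so that `a i = b i = 0` for `i ≥ m`, making the encoding unique). -/
def PathWit (N k m : ℕ) [NeZero N] (w w' : Equiv.Perm (Fin N))
    (ab : (ℕ → ℕ) × (ℕ → ℕ)) : Prop :=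
  StepOK N k m w ab.1 ab.2 ∧ w' = w * tProd N ab.1 ab.2 m ∧
    ∀ i, m ≤ i → ab.1 i = 0 ∧ ab.2 i = 0

/-- Paths of length `m` in the `k`-Bruhat order from `w` to `w'` with strictly
increasing labels. -/
def IncPaths (N k m : ℕ) [NeZero N] (w w' : Equiv.Perm (Fin N)) :
    Set ((ℕ → ℕ) × (ℕ → ℕ)) :=
  {ab | PathWit N k m w w' ab ∧
    ∀ i j, i < j → j < m → label w ab.1 ab.2 i < label w ab.1 ab.2 j}

/-- Paths of length `m` in the `k`-Bruhat order from `w` to `w'` with strictly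
decreasing labels. -/
def DecPaths (N k m : ℕ) [NeZero N] (w w' : Equiv.Perm (Fin N)) :
    Set ((ℕ → ℕ) × (ℕ → ℕ)) :=
  {ab | PathWit N k m w w' ab ∧
    ∀ i j, i < j → j < m → label w ab.1 ab.2 j < label w ab.1 ab.2 i}


/-- The cycle `(x₁ x₂ … x_r)` (sending `x₁ ↦ x₂ ↦ ⋯ ↦ x_r ↦ x₁`), as a product
of transpositions. -/
def cycleList (N : ℕ) [NeZero N] (l : List ℕ) : Equiv.Perm (Fin N) :=
  ((l.zip l.tail).map fun p => t N p.1 p.2).prod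

/-- The Grassmannian permutation `h[k;p,q]` of descent `k` and hook shape `(p,1^{q-1})`:
the `(p+q)`-cycle `(k-q+1  k-q+2 … k  k+p  k+p-1 … k+1)`. -/
def hookPerm (N k p q : ℕ) [NeZero N] : Equiv.Perm (Fin N) :=
  cycleList N (((List.range q).map fun i => k - q + 1 + i) ++
    ((List.range p).reverse.map fun i => k + 1 + i))

/-- `w|ₚ ∈ S_{N-1}`: delete row `p` and column `w(p)` from the permutation matrix of `w`. -/
def drop {N : ℕ} (w : Equiv.Perm (Fin (N + 1))) (p : Fin (N + 1)) : Equiv.Perm (Fin N) :=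
  Equiv.removeNone (((finSuccEquiv' p).symm.trans (w : Fin (N + 1) ≃ Fin (N + 1))).trans
    (finSuccEquiv' (w p)))

/-- `lam` is a partition with at most `k` parts (1-indexed parts `lam 1 ≥ lam 2 ≥ ⋯`,
normalized by `lam 0 = 0`). -/
def IsPartFun (k : ℕ) (lam : ℕ → ℕ) : Prop :=
  lam 0 = 0 ∧ (∀ j, 1 ≤ j → lam (j + 1) ≤ lam j) ∧ ∀ j, k < j → lam j = 0

/-- `h_d(x₁,…,x_k)` for an integer `d`, with `h_d = 0` for `d < 0`. -/
noncomputable def hPolyZ (N k : ℕ) (d : ℤ) : MvPolynomial (Fin N) ℤ :=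
  if 0 ≤ d then hPoly N k d.toNat else 0

/-- The Schur polynomial `s_λ(x₁,…,x_k)`, via the Jacobi–Trudi determinant
`det(h_{λᵢ+j-i})_{1 ≤ i,j ≤ k}`. -/
noncomputable def schurPoly (N k : ℕ) (lam : ℕ → ℕ) : MvPolynomial (Fin N) ℤ :=
  (Matrix.of fun i j : Fin k =>
    hPolyZ N k ((lam ((i : ℕ) + 1) : ℤ) + (j : ℕ) - (i : ℕ))).det

/-- `r_j = #{i : aᵢ = j}` (with `i` ranging over `0,…,m-1`, 0-indexed). -/
def rJ (a : ℕ → ℕ) (m j : ℕ) : ℕ := ((Finset.range m).filter fun i => a i = j).card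

/-- `μ_j = r_{j+1} + ⋯ + r_k`. -/
def muJ (a : ℕ → ℕ) (m k j : ℕ) : ℕ :=
  if j = 0 then 0 else ∑ j' ∈ Finset.Icc (j + 1) k, rJ a m j'

/-- `λ_j = μ_j + r_j`. -/
def lamJ (a : ℕ → ℕ) (m k j : ℕ) : ℕ :=
  if j = 0 then 0 else muJ a m k j + rJ a m j

/-- `d_j = #{i : bᵢ = N+1-j}` (with `i` ranging over `0,…,m-1`, 0-indexed). -/
def dJ (b : ℕ → ℕ) (m N j : ℕ) : ℕ :=
  ((Finset.range m).filter fun i => b i = N + 1 - j).card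

/-- `μ′_j = d_{j+1} + ⋯ + d_{N-k}`. -/
def muJ' (b : ℕ → ℕ) (m N k j : ℕ) : ℕ :=
  if j = 0 then 0 else ∑ j' ∈ Finset.Icc (j + 1) (N - k), dJ b m N j'

/-- `λ′_j = μ′_j + d_j`. -/
def lamJ' (b : ℕ → ℕ) (m N k j : ℕ) : ℕ :=
  if j = 0 then 0 else muJ' b m N k j + dJ b m N j

/-- The conjugate (transpose) partition: `νᵗ_j = #{i : νᵢ ≥ j}`, for `ν` with at
most `k` parts. -/
def conjPart (k : ℕ) (nu : ℕ → ℕ) (j : ℕ) : ℕ :=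
  if j = 0 then 0 else ((Finset.Icc 1 k).filter fun i => j ≤ nu i).card

/-- `wv` is the Grassmannian permutation of descent `k` and shape `nu`:
`wv(j) = j + ν_{k+1-j}` for `1 ≤ j ≤ k`, and `wv` is increasing on `{k+1,…,N}`. -/
def IsGrassOf (N k : ℕ) [NeZero N] (nu : ℕ → ℕ) (wv : Equiv.Perm (Fin N)) : Prop :=
  (∀ j, 1 ≤ j → j ≤ k → val wv j = j + nu (k + 1 - j)) ∧
  (∀ j, k < j → j < N → val wv j < val wv (j + 1))

/-- Paths of length `m` in the `k`-Bruhat order from `w` to `w'` whose labels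
increase strictly for the first `p` steps and decrease strictly thereafter
(positions `p, p+1, …, m` being decreasing, 1-indexed). -/
def IncDecPaths (N k m p : ℕ) [NeZero N] (w w' : Equiv.Perm (Fin N)) :
    Set ((ℕ → ℕ) × (ℕ → ℕ)) :=
  {ab | PathWit N k m w w' ab ∧
    (∀ i j, i < j → j < p → label w ab.1 ab.2 i < label w ab.1 ab.2 j) ∧
    (∀ i j, p - 1 ≤ i → i < j → j < m → label w ab.1 ab.2 j < label w ab.1 ab.2 i)}

/-- Paths of length `m` in the `k`-Bruhat order from `w` to `w'` whose labels
decrease strictly for the first `q` steps and increase strictly thereafter. -/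
def DecIncPaths (N k m q : ℕ) [NeZero N] (w w' : Equiv.Perm (Fin N)) :
    Set ((ℕ → ℕ) × (ℕ → ℕ)) :=
  {ab | PathWit N k m w w' ab ∧
    (∀ i j, i < j → j < q → label w ab.1 ab.2 j < label w ab.1 ab.2 i) ∧
    (∀ i j, q - 1 ≤ i → i < j → j < m → label w ab.1 ab.2 i < label w ab.1 ab.2 j)}


/-! ### Auxiliary lemmas -/

section Aux

variable {N : ℕ} [NeZero N]

lemma pos_coe {j : ℕ} (hj : j ≤ N) : ((pos N j : Fin N) : ℕ) = j - 1 := by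
  have hN : 0 < N := Nat.pos_of_ne_zero (NeZero.ne N)
  simp only [pos]
  exact Nat.mod_eq_of_lt (by omega)

lemma pos_lt_pos {a b : ℕ} (h1 : 1 ≤ a) (hab : a < b) (hb : b ≤ N) :
    pos N a < pos N b := by
  rw [Fin.lt_def, pos_coe (by omega), pos_coe hb]; omega

lemma pos_ne_pos {a b : ℕ} (h1 : 1 ≤ a) (hab : a ≠ b) (ha : a ≤ N) (hb : 1 ≤ b)
    (hbN : b ≤ N) : pos N a ≠ pos N b := by
  intro h
  have := congrArg (fun x : Fin N => (x : ℕ)) h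
  simp only [pos_coe ha, pos_coe hbN] at this
  omega

/-- The inversion set. -/
private def InvSet (v : Equiv.Perm (Fin N)) : Finset (Fin N × Fin N) :=
  Finset.univ.filter fun p : Fin N × Fin N => p.1 < p.2 ∧ v p.2 < v p.1

set_option linter.unusedSectionVars false in
lemma len_eq_card (v : Equiv.Perm (Fin N)) : len v = (InvSet v).card := rfl

lemma len_mul_swap_succ (u : Equiv.Perm (Fin N)) {x y : Fin N}
    (hxy : (x : ℕ) + 1 = (y : ℕ)) (h : u x < u y) :
    len (u * Equiv.swap x y) = len u + 1 := by
  set s := Equiv.swap x y with hs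
  have hxney : x ≠ y := by intro hh; rw [hh] at hxy; omega
  have key : ∀ p q : Fin N, p < q → ¬(p = x ∧ q = y) → s p < s q := by
    intro p q hpq hne
    rcases eq_or_ne p x with hp | hp
    · rcases eq_or_ne q y with hq | hq
      · exact absurd ⟨hp, hq⟩ hne
      · have hq2 : q ≠ x := by rintro rfl; exact absurd hp (ne_of_lt hpq)
        rw [hp, hs, Equiv.swap_apply_left, Equiv.swap_apply_of_ne_of_ne hq2 hq]
        rw [Fin.lt_def] at hpq ⊢
        rw [hp] at hpq
        have : (q : ℕ) ≠ (y : ℕ) := fun hh => hq (Fin.ext hh)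
        omega
    · rcases eq_or_ne p y with hp2 | hp2
      · have hq1 : q ≠ x := by
          rintro rfl
          rw [Fin.lt_def] at hpq; rw [hp2] at hpq; omega
        have hq2 : q ≠ y := by rintro rfl; exact absurd hp2 (ne_of_lt hpq)
        rw [hp2, hs, Equiv.swap_apply_right, Equiv.swap_apply_of_ne_of_ne hq1 hq2]
        rw [Fin.lt_def] at hpq ⊢
        rw [hp2] at hpq
        omega
      · rw [hs, Equiv.swap_apply_of_ne_of_ne hp hp2]
        rcases eq_or_ne q x with hq | hq
        · rw [hq, Equiv.swap_apply_left]
          rw [Fin.lt_def] at hpq ⊢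
          rw [hq] at hpq
          omega
        · rcases eq_or_ne q y with hq2 | hq2
          · rw [hq2, Equiv.swap_apply_right]
            rw [Fin.lt_def] at hpq ⊢
            rw [hq2] at hpq
            have : (p : ℕ) ≠ (x : ℕ) := fun hh => hp (Fin.ext hh)
            omega
          · rw [Equiv.swap_apply_of_ne_of_ne hq hq2]; exact hpq
  have hset : InvSet (u * s) =
      insert (x, y) ((InvSet u).image fun p : Fin N × Fin N => (s p.1, s p.2)) := by
    ext ⟨p, q⟩
    simp only [InvSet, Finset.mem_filter]
    simp only [InvSet, Finset.mem_insert, Finset.mem_image, Finset.mem_filter,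
      Finset.mem_univ, true_and, Equiv.Perm.mul_apply, Prod.mk.injEq, Prod.exists]
    constructor
    · rintro ⟨hpq, hv⟩
      by_cases hxyc : p = x ∧ q = y
      · exact Or.inl hxyc
      · refine Or.inr ⟨s p, s q, ⟨key p q hpq hxyc, ?_⟩, ?_, ?_⟩
        · simpa [hs] using hv
        · simp [hs]
        · simp [hs]
    · rintro (⟨rfl, rfl⟩ | ⟨r, r', ⟨hrr', hv⟩, rfl, rfl⟩)
      · refine ⟨Fin.lt_def.mpr (by omega), ?_⟩
        simpa [hs] using h
      · refine ⟨?_, by simpa [hs] using hv⟩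
        apply key r r' hrr'
        rintro ⟨rfl, rfl⟩
        exact absurd h (not_lt.mpr hv.le)
  have hnotmem : (x, y) ∉ (InvSet u).image fun p : Fin N × Fin N => (s p.1, s p.2) := by
    simp only [InvSet, Finset.mem_image, Finset.mem_filter, Finset.mem_univ, true_and,
      Prod.mk.injEq, Prod.exists, not_exists, not_and]
    rintro r r' ⟨hrr', _⟩ hr hr'
    have h1 : r = y := s.injective (by rw [hr, hs, Equiv.swap_apply_right])
    have h2 : r' = x := s.injective (by rw [hr', hs, Equiv.swap_apply_left])
    rw [h1, h2, Fin.lt_def] at hrr'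
    omega
  have hinj : Function.Injective fun p : Fin N × Fin N => (s p.1, s p.2) := by
    intro p q hpq
    simp only [Prod.mk.injEq] at hpq
    exact Prod.ext (s.injective hpq.1) (s.injective hpq.2)
  rw [len_eq_card, len_eq_card, hset, Finset.card_insert_of_notMem hnotmem,
    Finset.card_image_of_injective _ hinj]

lemma len_mul_swap_pred (u : Equiv.Perm (Fin N)) {x y : Fin N}
    (hxy : (x : ℕ) + 1 = (y : ℕ)) (h : u y < u x) :
    len u = len (u * Equiv.swap x y) + 1 := by
  have := len_mul_swap_succ (u * Equiv.swap x y) hxy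
    (by simpa [Equiv.Perm.mul_apply] using h)
  rwa [mul_assoc, Equiv.swap_mul_self, mul_one] at this

private lemma len_lt_len_mul_swap_aux :
    ∀ d (u : Equiv.Perm (Fin N)) (x y : Fin N), (y : ℕ) - (x : ℕ) = d → x < y →
      u x < u y → len u < len (u * Equiv.swap x y) := by
  intro d
  induction d using Nat.strong_induction_on with
  | _ d ih =>
    intro u x y hd hxy h
    rw [Fin.lt_def] at hxy
    rcases eq_or_ne ((x : ℕ) + 1) (y : ℕ) with hadj | hnadj
    · rw [len_mul_swap_succ u hadj h]; omega
    · have hyN : (y : ℕ) < N := y.isLt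
      set z : Fin N := ⟨(y : ℕ) - 1, by omega⟩ with hz
      have hz1 : (z : ℕ) + 1 = (y : ℕ) := by simp [hz]; omega
      have hxz : x < z := by rw [Fin.lt_def]; simp [hz]; omega
      have hzy : z < y := by rw [Fin.lt_def]; omega
      have hxz' : x ≠ z := ne_of_lt hxz
      have hxy' : x ≠ y := by rw [Fin.ne_iff_vne]; omega
      have hzy' : z ≠ y := ne_of_lt hzy
      have hsw : Equiv.swap x y = Equiv.swap z y * Equiv.swap x z * (Equiv.swap z y)⁻¹ := by
        have := Equiv.swap_apply_apply (Equiv.swap z y) x z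
        rw [Equiv.swap_apply_of_ne_of_ne hxz' hxy', Equiv.swap_apply_left] at this
        exact this
      rw [hsw, Equiv.swap_inv, ← mul_assoc, ← mul_assoc]
      set u1 := u * Equiv.swap z y with hu1
      set u2 := u1 * Equiv.swap x z with hu2
      have hu1x : u1 x = u x := by
        rw [hu1, Equiv.Perm.mul_apply, Equiv.swap_apply_of_ne_of_ne hxz' hxy']
      have hu1z : u1 z = u y := by rw [hu1, Equiv.Perm.mul_apply, Equiv.swap_apply_left]
      have hu1y : u1 y = u z := by rw [hu1, Equiv.Perm.mul_apply, Equiv.swap_apply_right]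
      have hu2z : u2 z = u x := by
        rw [hu2, Equiv.Perm.mul_apply, Equiv.swap_apply_right, hu1x]
      have hu2y : u2 y = u z := by
        rw [hu2, Equiv.Perm.mul_apply,
          Equiv.swap_apply_of_ne_of_ne (Ne.symm hxy') (Ne.symm hzy'), hu1y]
      have hIH : len u1 < len u2 := by
        refine ih ((z : ℕ) - (x : ℕ)) (by omega) u1 x z rfl (Fin.lt_def.mpr (by omega)) ?_
        rw [hu1x, hu1z]; exact h
      have hne_zx : u z ≠ u x := fun hh => hxz' (u.injective hh).symm
      have hne_zy : u z ≠ u y := fun hh => hzy' (u.injective hh)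
      rcases lt_or_gt_of_ne hne_zy with hzy2 | hzy2
      · -- u z < u y : len u1 = len u + 1
        have h1 : len u1 = len u + 1 := len_mul_swap_succ u hz1 hzy2
        rcases lt_or_gt_of_ne hne_zx with hzx2 | hzx2
        · -- u z < u x : last step decreases
          have h2 : len u2 = len (u2 * Equiv.swap z y) + 1 :=
            len_mul_swap_pred u2 hz1 (by rw [hu2z, hu2y]; exact hzx2)
          omega
        · -- u x < u z : last step increases
          have h2 : len (u2 * Equiv.swap z y) = len u2 + 1 :=
            len_mul_swap_succ u2 hz1 (by rw [hu2z, hu2y]; exact hzx2)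
          omega
      · -- u y < u z : len u = len u1 + 1
        have h1 : len u = len u1 + 1 := len_mul_swap_pred u hz1 hzy2
        have h2 : len (u2 * Equiv.swap z y) = len u2 + 1 :=
          len_mul_swap_succ u2 hz1 (by rw [hu2z, hu2y]; exact lt_trans h hzy2)
        omega

lemma len_lt_len_mul_swap {u : Equiv.Perm (Fin N)} {x y : Fin N} (hxy : x < y)
    (h : u x < u y) : len u < len (u * Equiv.swap x y) :=
  len_lt_len_mul_swap_aux _ u x y rfl hxy h

lemma apply_lt_iff_len_lt {u : Equiv.Perm (Fin N)} {x y : Fin N} (hxy : x < y) :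
    u x < u y ↔ len u < len (u * Equiv.swap x y) := by
  constructor
  · exact len_lt_len_mul_swap hxy
  · intro hl
    by_contra hc
    have hne : u y ≠ u x := fun hh => (ne_of_lt hxy) (u.injective hh).symm
    have h2 : u y < u x := lt_of_le_of_ne (not_lt.mp hc) hne
    have := len_lt_len_mul_swap (u := u * Equiv.swap x y) hxy
      (by simpa [Equiv.Perm.mul_apply] using h2)
    rw [mul_assoc, Equiv.swap_mul_self, mul_one] at this
    omega

lemma apply_lt_of_len_succ {u : Equiv.Perm (Fin N)} {x y : Fin N} (hxy : x < y)
    (h : len (u * Equiv.swap x y) = len u + 1) : u x < u y :=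
  (apply_lt_iff_len_lt hxy).mpr (by omega)

/-! tProd lemmas -/

lemma tProd_zero (a b : ℕ → ℕ) : tProd N a b 0 = 1 := rfl

lemma tProd_succ (a b : ℕ → ℕ) (i : ℕ) :
    tProd N a b (i + 1) = tProd N a b i * t N (a i) (b i) := by
  rw [tProd, List.range_succ, List.map_append, List.prod_append]
  rfl

lemma tProd_congr {a b a' b' : ℕ → ℕ} {i : ℕ}
    (h : ∀ j, j < i → a j = a' j ∧ b j = b' j) :
    tProd N a b i = tProd N a' b' i := by
  unfold tProd
  congr 1
  apply List.map_congr_left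
  intro j hj
  rw [List.mem_range] at hj
  rw [(h j hj).1, (h j hj).2]

/-- The label of step `i`, as an element of `Fin N`. -/
def cFin (w : Equiv.Perm (Fin N)) (a b : ℕ → ℕ) (i : ℕ) : Fin N :=
  (w * tProd N a b (i + 1)) (pos N (a i))

lemma label_eq_cFin (w : Equiv.Perm (Fin N)) (a b : ℕ → ℕ) (i : ℕ) :
    label w a b i = (cFin w a b i : ℕ) + 1 := rfl

lemma label_lt_label_iff (w : Equiv.Perm (Fin N)) (a b : ℕ → ℕ) (i j : ℕ) :
    label w a b i < label w a b j ↔ cFin w a b i < cFin w a b j := by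
  rw [label_eq_cFin, label_eq_cFin, Fin.lt_def]
  omega

lemma cFin_eq (w : Equiv.Perm (Fin N)) (a b : ℕ → ℕ) (i : ℕ) :
    cFin w a b i = (w * tProd N a b i) (pos N (b i)) := by
  rw [cFin, tProd_succ, ← mul_assoc, t, Equiv.Perm.mul_apply, Equiv.swap_apply_left,
    Equiv.Perm.mul_apply]

/-- The per-step value inequality coming from the length conditions. -/
lemma step_lt {k m : ℕ} {w : Equiv.Perm (Fin N)} {a b : ℕ → ℕ}
    (hS : StepOK N k m w a b) {i : ℕ} (hi : i < m) :
    (w * tProd N a b i) (pos N (a i)) < (w * tProd N a b i) (pos N (b i)) := by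
  obtain ⟨hab, hlen⟩ := hS
  obtain ⟨ha1, hak, hkb, hbN⟩ := hab i hi
  have hpos : pos N (a i) < pos N (b i) := pos_lt_pos ha1 (by omega) hbN
  apply apply_lt_of_len_succ hpos
  have h1 := hlen i (le_of_lt hi)
  have h2 := hlen (i + 1) hi
  rw [tProd_succ] at h2
  rw [← mul_assoc] at h2
  rw [t] at h2
  omega

/-- Trajectory of the value `q`: the last step at which `q` moves. -/
lemma lastMove (w : Equiv.Perm (Fin N)) (a b : ℕ → ℕ) (q : Fin N) :
    ∀ d j M, j + d = M → (w * tProd N a b j)⁻¹ q ≠ (w * tProd N a b M)⁻¹ q →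
      ∃ l, j ≤ l ∧ l < M ∧
        ((w * tProd N a b l)⁻¹ q = pos N (a l) ∨ (w * tProd N a b l)⁻¹ q = pos N (b l)) ∧
        (w * tProd N a b (l + 1))⁻¹ q = (w * tProd N a b M)⁻¹ q := by
  intro d
  induction d with
  | zero =>
    intro j M h hne
    obtain rfl : j = M := by omega
    exact absurd rfl hne
  | succ d ih =>
    intro j M h hne
    by_cases hc : (w * tProd N a b (j + 1))⁻¹ q = (w * tProd N a b M)⁻¹ q
    · refine ⟨j, le_refl _, by omega, ?_, hc⟩
      have hmove : (w * tProd N a b j)⁻¹ q ≠ (w * tProd N a b (j + 1))⁻¹ q := by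
        rw [hc]; exact hne
      have hpi : (w * tProd N a b (j + 1))⁻¹ q =
          (t N (a j) (b j)) ((w * tProd N a b j)⁻¹ q) := by
        rw [tProd_succ, ← mul_assoc, mul_inv_rev, Equiv.Perm.mul_apply, t, Equiv.swap_inv]
      by_contra hcon
      push_neg at hcon
      apply hmove
      rw [hpi, t, Equiv.swap_apply_of_ne_of_ne hcon.1 hcon.2]
    · obtain ⟨l, h1, h2, h3, h4⟩ := ih (j + 1) M (by omega) hc
      exact ⟨l, by omega, h2, h3, h4⟩

/-- In a path with strictly increasing labels, the `b i` are pairwise distinct. -/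
lemma b_ne_of_incPath {k m : ℕ} {w : Equiv.Perm (Fin N)} {a b : ℕ → ℕ}
    (hS : StepOK N k m w a b)
    (hinc : ∀ i j, i < j → j < m → label w a b i < label w a b j) :
    ∀ i j, i < j → j < m → b i ≠ b j := by
  intro i j hij hjm heq
  have hex : ∃ l, i < l ∧ l < m ∧ b l = b i := ⟨j, hij, hjm, heq.symm⟩
  set j0 := Nat.find hex with hj0def
  obtain ⟨hij0, hj0m, hbj0⟩ := Nat.find_spec hex
  have hmin : ∀ l, i < l → l < j0 → b l ≠ b i := by
    intro l h1 h2 h3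
    exact Nat.find_min hex h2 ⟨h1, by omega, h3⟩
  have him : i < m := lt_trans hij hjm
  have stable : ∀ dl, i + 1 + dl ≤ j0 →
      (w * tProd N a b (i + 1 + dl)) (pos N (b i)) =
        (w * tProd N a b (i + 1)) (pos N (b i)) := by
    intro dl
    induction dl with
    | zero => intro _; rfl
    | succ dl ihd =>
      intro hle
      have hl : i + 1 + dl < j0 := by omega
      have hlm : i + 1 + dl < m := by omega
      obtain ⟨ha1, hak, hkb, hbN⟩ := hS.1 _ hlm
      obtain ⟨hai1, haki, hkbi, hbNi⟩ := hS.1 i him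
      have hfix : (t N (a (i + 1 + dl)) (b (i + 1 + dl))) (pos N (b i)) = pos N (b i) := by
        rw [t]
        apply Equiv.swap_apply_of_ne_of_ne
        · exact pos_ne_pos (by omega) (by omega) hbNi ha1 (by omega)
        · exact pos_ne_pos (by omega) (Ne.symm (hmin _ (by omega) hl)) hbNi (by omega) hbN
      rw [show i + 1 + (dl + 1) = (i + 1 + dl) + 1 by omega, tProd_succ, ← mul_assoc,
        Equiv.Perm.mul_apply, hfix]
      exact ihd (by omega)
  have h1 : cFin w a b j0 = (w * tProd N a b (i + 1)) (pos N (b i)) := by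
    rw [cFin_eq, hbj0, show j0 = i + 1 + (j0 - i - 1) by omega]
    exact stable _ (by omega)
  have h2 : (w * tProd N a b (i + 1)) (pos N (b i)) = (w * tProd N a b i) (pos N (a i)) := by
    rw [tProd_succ, ← mul_assoc, Equiv.Perm.mul_apply, t, Equiv.swap_apply_right]
  have h3 : cFin w a b i = (w * tProd N a b i) (pos N (b i)) := cFin_eq w a b i
  have hlt : cFin w a b j0 < cFin w a b i := by
    rw [h1, h2, h3]
    exact step_lt hS him
  have := (label_lt_label_iff w a b i j0).mp (hinc i j0 hij0 hj0m)
  exact absurd hlt (not_lt.mpr (le_of_lt this))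

/-- Backward direction: an increasing path yields `RelR`. -/
lemma relR_of_incPath {k m : ℕ} {w w' : Equiv.Perm (Fin N)} {x : (ℕ → ℕ) × (ℕ → ℕ)}
    (hx : x ∈ IncPaths N k m w w') : RelR N k m w w' := by
  obtain ⟨⟨hS, hw', _⟩, hinc⟩ := hx
  refine ⟨x.1, x.2, hS, hw', fun i j hi hj hij => ?_⟩
  rcases lt_or_gt_of_ne hij with h | h
  · exact b_ne_of_incPath hS hinc i j h hj
  · exact (b_ne_of_incPath hS hinc j i h hi).symm

lemma pi_succ (w : Equiv.Perm (Fin N)) (a b : ℕ → ℕ) (q : Fin N) (j : ℕ) :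
    (w * tProd N a b (j + 1))⁻¹ q = (t N (a j) (b j)) ((w * tProd N a b j)⁻¹ q) := by
  rw [tProd_succ, ← mul_assoc, mul_inv_rev, Equiv.Perm.mul_apply, t, Equiv.swap_inv]

/-- Key facts about the last label of an increasing path. -/
lemma cFin_last_spec {k m : ℕ} {w w' : Equiv.Perm (Fin N)} {x : (ℕ → ℕ) × (ℕ → ℕ)}
    (hx : x ∈ IncPaths N k (m + 1) w w') :
    ((w'⁻¹ (cFin w x.1 x.2 m) : ℕ) < k) ∧
    w⁻¹ (cFin w x.1 x.2 m) = pos N (x.2 m) ∧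
    w'⁻¹ (cFin w x.1 x.2 m) = pos N (x.1 m) ∧
    (∀ q : Fin N, ((w'⁻¹ q : ℕ) < k) → w⁻¹ q ≠ w'⁻¹ q → q ≤ cFin w x.1 x.2 m) := by
  obtain ⟨⟨hS, hw', hnorm⟩, hinc⟩ := hx
  set a := x.1
  set b := x.2
  set c := cFin w a b m with hcdef
  obtain ⟨hab, hlen⟩ := hS
  obtain ⟨ha1, hak, hkb, hbN⟩ := hab m (Nat.lt_succ_self m)
  have hkN : k < N := lt_of_lt_of_le hkb hbN
  have hinv3 : w'⁻¹ c = pos N (a m) := by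
    rw [hw', hcdef, cFin]
    exact Equiv.symm_apply_apply _ _
  have hinv1 : ((w'⁻¹ c : ℕ) < k) := by
    rw [hinv3, pos_coe (by omega)]; omega
  have hcm : (w * tProd N a b m)⁻¹ c = pos N (b m) := by
    rw [hcdef, cFin_eq]
    exact Equiv.symm_apply_apply _ _
  have hmulone : w = w * tProd N a b 0 := by rw [tProd_zero, mul_one]
  have hinv2 : w⁻¹ c = pos N (b m) := by
    rw [← hcm]
    by_contra hne
    have hne' : (w * tProd N a b 0)⁻¹ c ≠ (w * tProd N a b m)⁻¹ c := by
      rw [← hmulone]; exact hne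
    obtain ⟨l, -, hlm, hmove, hstab⟩ := lastMove w a b c m 0 m (by omega) hne'
    have hlm1 : l < m + 1 := by omega
    rcases hmove with hmove | hmove
    · -- c moved right at step l : contradiction with strictness
      have hc_lt : c < cFin w a b l := by
        have h1 : c = (w * tProd N a b l) (pos N (a l)) := by
          rw [← hmove, Equiv.Perm.inv_def, Equiv.apply_symm_apply]
        have h2 := step_lt ⟨hab, hlen⟩ hlm1
        rw [← h1, ← cFin_eq] at h2
        exact h2
      have hltlab := (label_lt_label_iff w a b l m).mp (hinc l m hlm (Nat.lt_succ_self m))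
      exact absurd (lt_trans hc_lt hltlab) (lt_irrefl c)
    · -- c was the label of step l : contradiction with strictness
      have : cFin w a b l = c := by
        rw [cFin_eq, ← hmove, Equiv.Perm.inv_def, Equiv.apply_symm_apply]
      have hltlab := (label_lt_label_iff w a b l m).mp (hinc l m hlm (Nat.lt_succ_self m))
      rw [this] at hltlab
      exact absurd hltlab (lt_irrefl c)
  refine ⟨hinv1, hinv2, hinv3, ?_⟩
  intro q hq1 hq2
  have hne' : (w * tProd N a b 0)⁻¹ q ≠ (w * tProd N a b (m + 1))⁻¹ q := by
    rw [← hmulone, ← hw']; exact hq2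
  obtain ⟨l, -, hlm2, hmove, hstab⟩ := lastMove w a b q (m + 1) 0 (m + 1) (by omega) hne'
  rcases hmove with hmove | hmove
  · -- q moved right at its last move : its final position is beyond k, contradiction
    exfalso
    obtain ⟨hal1, halk, hklb, hlbN⟩ := hab l hlm2
    have hfin : w'⁻¹ q = pos N (b l) := by
      rw [hw', ← hstab, pi_succ, hmove, t, Equiv.swap_apply_left]
    rw [hfin, pos_coe (by omega)] at hq1
    omega
  · -- q is the label of step l
    have hql : cFin w a b l = q := by
      rw [cFin_eq, ← hmove, Equiv.Perm.inv_def, Equiv.apply_symm_apply]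
    rcases Nat.lt_or_ge l m with hl | hl
    · have := (label_lt_label_iff w a b l m).mp (hinc l m hl (Nat.lt_succ_self m))
      rw [hql] at this
      exact le_of_lt this
    · have : l = m := by omega
      rw [← hql, this]

/-- Restriction of an increasing path to its first `m` steps. -/
lemma incPath_prefix {k m : ℕ} {w w' : Equiv.Perm (Fin N)} {x : (ℕ → ℕ) × (ℕ → ℕ)}
    (hx : x ∈ IncPaths N k (m + 1) w w') :
    ((fun i => if i < m then x.1 i else 0, fun i => if i < m then x.2 i else 0) :
      (ℕ → ℕ) × (ℕ → ℕ)) ∈ IncPaths N k m w (w' * t N (x.1 m) (x.2 m)) := by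
  obtain ⟨⟨⟨hab, hlen⟩, hw', hnorm⟩, hinc⟩ := hx
  set a' : ℕ → ℕ := fun i => if i < m then x.1 i else 0 with ha'
  set b' : ℕ → ℕ := fun i => if i < m then x.2 i else 0 with hb'
  have hagree : ∀ l, l ≤ m → tProd N a' b' l = tProd N x.1 x.2 l := by
    intro l hl
    apply tProd_congr
    intro j hj
    constructor <;> simp [ha', hb', if_pos (by omega : j < m)]
  have hlab : ∀ i, i < m → label w a' b' i = label w x.1 x.2 i := by
    intro i hi
    unfold label
    rw [hagree (i + 1) (by omega)]
    have : a' i = x.1 i := by simp [ha', if_pos hi]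
    rw [this]
  refine ⟨⟨⟨?_, ?_⟩, ?_, ?_⟩, ?_⟩
  · intro i hi
    have := hab i (by omega)
    simpa [ha', hb', if_pos hi] using this
  · intro i hi
    rw [hagree i hi]
    exact hlen i (by omega)
  · rw [hagree m (le_refl m), hw', tProd_succ, t, mul_assoc, mul_assoc (tProd N x.1 x.2 m), Equiv.swap_mul_self, mul_one]
  · intro i hi
    constructor <;> simp [ha', hb', if_neg (by omega : ¬ i < m)]
  · intro i j hij hjm
    rw [hlab i (by omega), hlab j hjm]
    exact hinc i j hij (by omega)

/-- Uniqueness of increasing paths. -/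
lemma incPath_unique {k : ℕ} {w : Equiv.Perm (Fin N)} :
    ∀ m (w' : Equiv.Perm (Fin N)) (x y : (ℕ → ℕ) × (ℕ → ℕ)),
      x ∈ IncPaths N k m w w' → y ∈ IncPaths N k m w w' → x = y := by
  intro m
  induction m with
  | zero =>
    intro w' x y hx hy
    obtain ⟨⟨_, _, hxn⟩, _⟩ := hx
    obtain ⟨⟨_, _, hyn⟩, _⟩ := hy
    apply Prod.ext
    · funext i
      rw [(hxn i (Nat.zero_le i)).1, (hyn i (Nat.zero_le i)).1]
    · funext i
      rw [(hxn i (Nat.zero_le i)).2, (hyn i (Nat.zero_le i)).2]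
  | succ m ih =>
    intro w' x y hx hy
    obtain ⟨hxc1, hxc2, hxc3, hxmax⟩ := cFin_last_spec hx
    obtain ⟨hyc1, hyc2, hyc3, hymax⟩ := cFin_last_spec hy
    obtain ⟨hxa1, hxak, hxkb, hxbN⟩ := hx.1.1.1 m (Nat.lt_succ_self m)
    obtain ⟨hya1, hyak, hykb, hybN⟩ := hy.1.1.1 m (Nat.lt_succ_self m)
    have hkN : k < N := lt_of_lt_of_le hxkb hxbN
    have hnex : w⁻¹ (cFin w x.1 x.2 m) ≠ w'⁻¹ (cFin w x.1 x.2 m) := by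
      rw [hxc2, hxc3]
      exact pos_ne_pos (by omega) (by omega) hxbN (by omega) (by omega)
    have hney : w⁻¹ (cFin w y.1 y.2 m) ≠ w'⁻¹ (cFin w y.1 y.2 m) := by
      rw [hyc2, hyc3]
      exact pos_ne_pos (by omega) (by omega) hybN (by omega) (by omega)
    have hc : cFin w x.1 x.2 m = cFin w y.1 y.2 m :=
      le_antisymm (hymax _ hxc1 hnex) (hxmax _ hyc1 hney)
    have hax : pos N (x.1 m) = pos N (y.1 m) := by rw [← hxc3, ← hyc3, hc]
    have hbx : pos N (x.2 m) = pos N (y.2 m) := by rw [← hxc2, ← hyc2, hc]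
    have ham : x.1 m = y.1 m := by
      have := congrArg (fun z : Fin N => (z : ℕ)) hax
      simp only [pos_coe (by omega : x.1 m ≤ N), pos_coe (by omega : y.1 m ≤ N)] at this
      omega
    have hbm : x.2 m = y.2 m := by
      have := congrArg (fun z : Fin N => (z : ℕ)) hbx
      simp only [pos_coe hxbN, pos_coe hybN] at this
      omega
    have hx' := incPath_prefix hx
    have hy' := incPath_prefix hy
    rw [← ham, ← hbm] at hy'
    have hpre := ih (w' * t N (x.1 m) (x.2 m)) _ _ hx' hy'
    have hpa := congrArg Prod.fst hpre
    have hpb := congrArg Prod.snd hpre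
    simp only at hpa hpb
    obtain ⟨⟨_, _, hxn⟩, _⟩ := hx
    obtain ⟨⟨_, _, hyn⟩, _⟩ := hy
    apply Prod.ext
    · funext i
      rcases lt_trichotomy i m with h | h | h
      · have := congrFun hpa i
        simpa [if_pos h] using this
      · rw [h]; exact ham
      · rw [(hxn i (by omega)).1, (hyn i (by omega)).1]
    · funext i
      rcases lt_trichotomy i m with h | h | h
      · have := congrFun hpb i
        simpa [if_pos h] using this
      · rw [h]; exact hbm
      · rw [(hxn i (by omega)).2, (hyn i (by omega)).2]

set_option linter.unusedSectionVars false in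
private lemma chain_of_adj {m : ℕ} {c : ℕ → Fin N} (h : ∀ i, i + 1 < m → c i < c (i + 1)) :
    ∀ i j, i < j → j < m → c i < c j := by
  have key : ∀ d i, i + d + 1 < m → c i < c (i + d + 1) := by
    intro d
    induction d with
    | zero => intro i hi; exact h i hi
    | succ d ihd =>
      intro i hi
      exact lt_trans (ihd i (by omega))
        (by have := h (i + d + 1) (by omega); rwa [show i + d + 1 + 1 = i + (d+1) + 1 by omega] at this)
  intro i j hij hjm
  have := key (j - i - 1) i (by omega)
  rwa [show i + (j - i - 1) + 1 = j by omega] at this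

/-- A sorted path can be normalized into an increasing path. -/
private lemma incPath_of_sorted {k m : ℕ} {w : Equiv.Perm (Fin N)} {a b : ℕ → ℕ}
    (hS : StepOK N k m w a b)
    (hsort : ∀ i j, i < j → j < m → cFin w a b i < cFin w a b j) :
    (IncPaths N k m w (w * tProd N a b m)).Nonempty := by
  obtain ⟨hab, hlen⟩ := hS
  refine ⟨(fun i => if i < m then a i else 0, fun i => if i < m then b i else 0),
    ⟨⟨?_, ?_⟩, ?_, ?_⟩, ?_⟩
  case _ =>
    intro i hi
    simpa [if_pos hi] using hab i hi
  case _ =>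
    intro i hi
    have : tProd N (fun i => if i < m then a i else 0) (fun i => if i < m then b i else 0) i
        = tProd N a b i := by
      apply tProd_congr
      intro j hj
      constructor <;> simp [if_pos (by omega : j < m)]
    rw [this]
    exact hlen i hi
  case _ =>
    have : tProd N (fun i => if i < m then a i else 0) (fun i => if i < m then b i else 0) m
        = tProd N a b m := by
      apply tProd_congr
      intro j hj
      constructor <;> simp [if_pos hj]
    rw [this]
  case _ =>
    intro i hi
    constructor <;> simp [if_neg (by omega : ¬ i < m)]
  case _ =>
    intro i j hij hjm
    have hlab : ∀ l, l < m →
        label w (fun i => if i < m then a i else 0) (fun i => if i < m then b i else 0) l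
          = label w a b l := by
      intro l hl
      unfold label
      have h1 : tProd N (fun i => if i < m then a i else 0)
          (fun i => if i < m then b i else 0) (l + 1) = tProd N a b (l + 1) := by
        apply tProd_congr
        intro j hj
        constructor <;> simp [if_pos (by omega : j < m)]
      rw [h1]
      simp only [if_pos hl]
    rw [hlab i (by omega), hlab j hjm, label_lt_label_iff]
    exact hsort i j hij hjm

/-- Core of the forward direction : repeatedly exchange adjacent steps whose
labels are out of order. -/
private lemma sortAux {k m : ℕ} {w : Equiv.Perm (Fin N)} :
    ∀ μ (a b : ℕ → ℕ),
      StepOK N k m w a b →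
      (∀ i j, i < m → j < m → i ≠ j → b i ≠ b j) →
      (Finset.filter (fun p : ℕ × ℕ =>
          p.1 < p.2 ∧ ¬ cFin w a b p.1 < cFin w a b p.2)
        (Finset.range m ×ˢ Finset.range m)).card ≤ μ →
      (IncPaths N k m w (w * tProd N a b m)).Nonempty := by
  intro μ
  induction μ with
  | zero =>
    intro a b hS hbne hcard
    apply incPath_of_sorted hS
    intro i j hij hjm
    by_contra hc
    have : (i, j) ∈ Finset.filter (fun p : ℕ × ℕ =>
        p.1 < p.2 ∧ ¬ cFin w a b p.1 < cFin w a b p.2)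
        (Finset.range m ×ˢ Finset.range m) := by
      simp only [Finset.mem_filter, Finset.mem_product, Finset.mem_range]
      exact ⟨⟨by omega, hjm⟩, hij, hc⟩
    have := Finset.card_pos.mpr ⟨_, this⟩
    omega
  | succ μ ih =>
    intro a b hS hbne hcard
    by_cases hemp : ∀ i j, i < j → j < m → cFin w a b i < cFin w a b j
    · exact incPath_of_sorted hS hemp
    · -- there is an adjacent descent
      have hadj : ∃ i, i + 1 < m ∧ ¬ cFin w a b i < cFin w a b (i + 1) := by
        by_contra hno
        push_neg at hno
        exact hemp (chain_of_adj fun i hi => hno i hi)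
      obtain ⟨i, hi1, hbad⟩ := hadj
      obtain ⟨hab, hlen⟩ := hS
      obtain ⟨ha1i, haki, hkbi, hbNi⟩ := hab i (by omega)
      obtain ⟨ha1i', haki', hkbi', hbNi'⟩ := hab (i + 1) hi1
      have hbb : b i ≠ b (i + 1) := hbne i (i + 1) (by omega) hi1 (by omega)
      have hy1y2 : pos N (b i) ≠ pos N (b (i + 1)) :=
        pos_ne_pos (by omega) hbb hbNi (by omega) hbNi'
      have hx2y1 : pos N (a (i + 1)) ≠ pos N (b i) :=
        pos_ne_pos (by omega) (by omega) (by omega) (by omega) hbNi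
      have hy2x1 : pos N (b (i + 1)) ≠ pos N (a i) :=
        pos_ne_pos (by omega) (by omega) hbNi' (by omega) (by omega)
      have hx1y2 : pos N (a i) ≠ pos N (b (i + 1)) := hy2x1.symm
      have hlt1 : (w * tProd N a b i) (pos N (a i)) < (w * tProd N a b i) (pos N (b i)) :=
        step_lt ⟨hab, hlen⟩ (by omega)
      have ht1y2 : (t N (a i) (b i)) (pos N (b (i + 1))) = pos N (b (i + 1)) := by
        rw [t]; exact Equiv.swap_apply_of_ne_of_ne hy2x1 hy1y2.symm
      have hu1 : w * tProd N a b (i + 1) = w * tProd N a b i * t N (a i) (b i) := by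
        rw [tProd_succ, mul_assoc]
      have hcFi : cFin w a b i = (w * tProd N a b i) (pos N (b i)) := cFin_eq w a b i
      have hcFi1 : cFin w a b (i + 1) = (w * tProd N a b i) (pos N (b (i + 1))) := by
        rw [cFin_eq, hu1, Equiv.Perm.mul_apply, ht1y2]
      have ht1x1 : (t N (a i) (b i)) (pos N (a i)) = pos N (b i) := by
        rw [t]; exact Equiv.swap_apply_left _ _
      -- a i ≠ a (i+1), else the labels would be increasing
      have hane : a i ≠ a (i + 1) := by
        intro he
        apply hbad
        rw [hcFi, hcFi1]
        have hlt2 := step_lt ⟨hab, hlen⟩ hi1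
        rw [hu1, ← he] at hlt2
        simp only [Equiv.Perm.mul_apply] at hlt2 ⊢
        rw [ht1y2, ht1x1] at hlt2
        exact hlt2
      have hx1x2 : pos N (a i) ≠ pos N (a (i + 1)) :=
        pos_ne_pos ha1i hane (by omega) ha1i' (by omega)
      have ht1x2 : (t N (a i) (b i)) (pos N (a (i + 1))) = pos N (a (i + 1)) := by
        rw [t]; exact Equiv.swap_apply_of_ne_of_ne hx1x2.symm hx2y1
      have ht2x1 : (t N (a (i + 1)) (b (i + 1))) (pos N (a i)) = pos N (a i) := by
        rw [t]; exact Equiv.swap_apply_of_ne_of_ne hx1x2 hx1y2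
      have ht2y1 : (t N (a (i + 1)) (b (i + 1))) (pos N (b i)) = pos N (b i) := by
        rw [t]; exact Equiv.swap_apply_of_ne_of_ne hx2y1.symm hy1y2
      have ht2x2 : (t N (a (i + 1)) (b (i + 1))) (pos N (a (i + 1))) = pos N (b (i + 1)) := by
        rw [t]; exact Equiv.swap_apply_left _ _
      have hlt2 : (w * tProd N a b i) (pos N (a (i + 1)))
          < (w * tProd N a b i) (pos N (b (i + 1))) := by
        have h := step_lt ⟨hab, hlen⟩ hi1
        rw [hu1] at h
        simp only [Equiv.Perm.mul_apply] at h ⊢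
        rw [ht1x2, ht1y2] at h
        exact h
      -- the two transpositions commute
      have hcomm : t N (a i) (b i) * t N (a (i + 1)) (b (i + 1))
          = t N (a (i + 1)) (b (i + 1)) * t N (a i) (b i) := by
        have h := Equiv.swap_apply_apply (Equiv.swap (pos N (a i)) (pos N (b i)))
          (pos N (a (i + 1))) (pos N (b (i + 1)))
        rw [Equiv.swap_apply_of_ne_of_ne hx1x2.symm hx2y1,
          Equiv.swap_apply_of_ne_of_ne hy2x1 hy1y2.symm, Equiv.swap_inv] at h
        rw [t, t]
        calc Equiv.swap (pos N (a i)) (pos N (b i))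
              * Equiv.swap (pos N (a (i + 1))) (pos N (b (i + 1)))
            = (Equiv.swap (pos N (a i)) (pos N (b i))
                * Equiv.swap (pos N (a (i + 1))) (pos N (b (i + 1)))
                * Equiv.swap (pos N (a i)) (pos N (b i)))
                * Equiv.swap (pos N (a i)) (pos N (b i)) := by
              rw [mul_assoc (Equiv.swap (pos N (a i)) (pos N (b i))
                * Equiv.swap (pos N (a (i + 1))) (pos N (b (i + 1)))),
                Equiv.swap_mul_self, mul_one]
          _ = Equiv.swap (pos N (a (i + 1))) (pos N (b (i + 1)))
                * Equiv.swap (pos N (a i)) (pos N (b i)) := by rw [← h]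
      -- the exchanged path
      set τ : ℕ → ℕ := fun j => if j = i then i + 1 else if j = i + 1 then i else j with hτ
      set a' : ℕ → ℕ := fun j => a (τ j) with ha'
      set b' : ℕ → ℕ := fun j => b (τ j) with hb'
      have hτi : τ i = i + 1 := by simp [hτ]
      have hτi1 : τ (i + 1) = i := by simp [hτ]
      have hτelse : ∀ j, j ≠ i → j ≠ i + 1 → τ j = j := by
        intro j h1 h2; simp [hτ, if_neg h1, if_neg h2]
      have hτlt : ∀ j, j < m → τ j < m := by
        intro j hj; simp only [hτ]; split_ifs <;> omega
      have hτinj : ∀ p q, τ p = τ q → p = q := by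
        intro p q
        simp only [hτ]; split_ifs <;> omega
      have ha'i : a' i = a (i + 1) := by simp only [ha', hτi]
      have hb'i : b' i = b (i + 1) := by simp only [hb', hτi]
      have ha'i1 : a' (i + 1) = a i := by simp only [ha', hτi1]
      have hb'i1 : b' (i + 1) = b i := by simp only [hb', hτi1]
      have hpre : ∀ l, l ≤ i → tProd N a' b' l = tProd N a b l := by
        intro l hl
        apply tProd_congr
        intro j hj
        have hje := hτelse j (by omega) (by omega)
        refine ⟨?_, ?_⟩ <;> simp [ha', hb', hje]
      have h1 : tProd N a' b' (i + 1) = tProd N a b i * t N (a (i + 1)) (b (i + 1)) := by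
        rw [tProd_succ, hpre i le_rfl, ha'i, hb'i]
      have h2 : tProd N a' b' (i + 2) = tProd N a b (i + 2) := by
        rw [show i + 2 = (i + 1) + 1 from rfl, tProd_succ, h1, ha'i1, hb'i1,
          tProd_succ, tProd_succ, mul_assoc, mul_assoc, ← hcomm]
      have hpost : ∀ d, tProd N a' b' (i + 2 + d) = tProd N a b (i + 2 + d) := by
        intro d
        induction d with
        | zero => exact h2
        | succ d ihd =>
          rw [show i + 2 + (d + 1) = (i + 2 + d) + 1 by omega, tProd_succ, tProd_succ, ihd]
          have hje := hτelse (i + 2 + d) (by omega) (by omega)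
          simp only [ha', hb', hje]
      have hToEq : ∀ l, l ≠ i + 1 → tProd N a' b' l = tProd N a b l := by
        intro l hl
        rcases Nat.lt_or_ge l (i + 1) with h | h
        · exact hpre l (by omega)
        · have := hpost (l - i - 2)
          rwa [show i + 2 + (l - i - 2) = l by omega] at this
      -- length conditions for the exchanged path
      have hx2lty2 : pos N (a (i + 1)) < pos N (b (i + 1)) := pos_lt_pos ha1i' (by omega) hbNi'
      have hx1lty1 : pos N (a i) < pos N (b i) := pos_lt_pos ha1i (by omega) hbNi
      have hstep1 : len (w * tProd N a b i)
          < len (w * tProd N a b i * t N (a (i + 1)) (b (i + 1))) := by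
        rw [t]
        exact len_lt_len_mul_swap hx2lty2 hlt2
      have hstep2 : len (w * tProd N a b i * t N (a (i + 1)) (b (i + 1)))
          < len (w * tProd N a b i * t N (a (i + 1)) (b (i + 1)) * t N (a i) (b i)) := by
        conv_lhs => rw [t]
        conv_rhs => rw [t, t]
        apply len_lt_len_mul_swap hx1lty1
        have ht2x1s := ht2x1
        have ht2y1s := ht2y1
        rw [t] at ht2x1s ht2y1s
        simp only [Equiv.Perm.mul_apply]
        rw [ht2x1s, ht2y1s]
        simpa only [Equiv.Perm.mul_apply] using hlt1
      have hprod2 : w * tProd N a b i * t N (a (i + 1)) (b (i + 1)) * t N (a i) (b i)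
          = w * tProd N a b (i + 2) := by
        rw [show i + 2 = (i + 1) + 1 from rfl, tProd_succ, tProd_succ]
        simp only [← mul_assoc]
        rw [mul_assoc (w * tProd N a b i), ← hcomm, ← mul_assoc]
      have hlen_i : len (w * tProd N a b i) = len w + i := hlen i (by omega)
      have hlen_i2 : len (w * tProd N a b (i + 2)) = len w + (i + 2) := hlen (i + 2) (by omega)
      have hsqueeze : len (w * tProd N a b i * t N (a (i + 1)) (b (i + 1)))
          = len w + (i + 1) := by
        rw [hprod2] at hstep2
        omega
      have hS' : StepOK N k m w a' b' := by
        constructor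
        · intro j hj
          have := hab (τ j) (hτlt j hj)
          simpa only [ha', hb'] using this
        · intro l hl
          rcases eq_or_ne l (i + 1) with rfl | hne
          · rw [h1, ← mul_assoc]
            exact hsqueeze
          · rw [hToEq l hne]
            exact hlen l hl
      -- labels of the exchanged path
      have hcF : ∀ j, cFin w a' b' j = cFin w a b (τ j) := by
        intro j
        rcases eq_or_ne j i with rfl | hji
        · rw [hτi, cFin, h1, ha'i, hcFi1, ← mul_assoc, Equiv.Perm.mul_apply, ht2x2]
        · rcases eq_or_ne j (i + 1) with rfl | hji1
          · rw [hτi1, cFin, show i + 1 + 1 = i + 2 from rfl, h2, ha'i1, hcFi,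
              show i + 2 = (i + 1) + 1 from rfl, tProd_succ, tProd_succ]
            simp only [← mul_assoc]
            rw [Equiv.Perm.mul_apply, ht2x1, Equiv.Perm.mul_apply, ht1x1]
          · have hτj : τ j = j := hτelse j hji hji1
            rw [hτj, cFin, cFin, hToEq (j + 1) (by omega)]
            simp only [ha', hτj]
      -- the bad set strictly decreases
      have hmemBad : (i, i + 1) ∈ Finset.filter (fun p : ℕ × ℕ =>
          p.1 < p.2 ∧ ¬ cFin w a b p.1 < cFin w a b p.2)
          (Finset.range m ×ˢ Finset.range m) := by
        simp only [Finset.mem_filter, Finset.mem_product, Finset.mem_range]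
        exact ⟨⟨by omega, hi1⟩, by omega, hbad⟩
      have hcFne : cFin w a b i ≠ cFin w a b (i + 1) := by
        rw [hcFi, hcFi1]
        intro he
        exact hy1y2 ((w * tProd N a b i).injective he)
      have hdesc : cFin w a b (i + 1) < cFin w a b i :=
        lt_of_le_of_ne (not_lt.mp hbad) (Ne.symm hcFne)
      have hcard' : (Finset.filter (fun p : ℕ × ℕ =>
          p.1 < p.2 ∧ ¬ cFin w a' b' p.1 < cFin w a' b' p.2)
          (Finset.range m ×ˢ Finset.range m)).card ≤ μ := by
        have hsub : (Finset.filter (fun p : ℕ × ℕ =>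
            p.1 < p.2 ∧ ¬ cFin w a' b' p.1 < cFin w a' b' p.2)
            (Finset.range m ×ˢ Finset.range m)).card ≤
            ((Finset.filter (fun p : ℕ × ℕ =>
              p.1 < p.2 ∧ ¬ cFin w a b p.1 < cFin w a b p.2)
              (Finset.range m ×ˢ Finset.range m)).erase (i, i + 1)).card := by
          apply Finset.card_le_card_of_injOn (fun p => (τ p.1, τ p.2))
          · rintro ⟨p, q⟩ hpq
            simp only [Finset.mem_coe, Finset.mem_filter, Finset.mem_product, Finset.mem_range] at hpq
            obtain ⟨⟨hpm, hqm⟩, hplq, hbadpq⟩ := hpq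
            have hnotii : ¬(p = i ∧ q = i + 1) := by
              rintro ⟨hp, hq⟩
              apply hbadpq
              rw [hp, hq, hcF i, hcF (i + 1), hτi, hτi1]
              exact hdesc
            have hτplt : τ p < τ q := by
              simp only [hτ]; split_ifs <;> omega
            rw [Finset.mem_coe, Finset.mem_erase]
            constructor
            · intro hEq
              rw [Prod.mk.injEq] at hEq
              obtain ⟨hp, hq⟩ := hEq
              simp only [hτ] at hp hq
              revert hp hq
              split_ifs <;> omega
            · simp only [Finset.mem_filter, Finset.mem_product, Finset.mem_range]
              refine ⟨⟨hτlt p hpm, hτlt q hqm⟩, hτplt, ?_⟩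
              rw [← hcF p, ← hcF q]
              exact hbadpq
          · rintro ⟨p, q⟩ - ⟨p', q'⟩ - hpq
            simp only [Prod.mk.injEq] at hpq ⊢
            exact ⟨hτinj _ _ hpq.1, hτinj _ _ hpq.2⟩
        rw [Finset.card_erase_of_mem hmemBad] at hsub
        have hpos := Finset.card_pos.mpr ⟨_, hmemBad⟩
        omega
      have hres := ih a' b' hS' (by
        intro p q hp hq hpq
        simp only [hb']
        exact hbne (τ p) (τ q) (hτlt p hp) (hτlt q hq) (fun he => hpq (hτinj _ _ he))) hcard'
      rwa [hToEq m (by omega)] at hres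

/-- Forward direction : `RelR` yields an increasing path. -/
lemma incPath_of_relR {k m : ℕ} {w w' : Equiv.Perm (Fin N)} (h : RelR N k m w w') :
    (IncPaths N k m w w').Nonempty := by
  obtain ⟨a, b, hS, hw', hbne⟩ := h
  rw [hw']
  refine sortAux _ a b hS hbne (le_refl _)

end Aux

/-- `w →_{r[k,m]} w'` iff there is a path of length `m` in the `k`-Bruhat order from
`w` to `w'` with strictly increasing labels; moreover such a path is unique
(paths being encoded by their normalized sequences of transpositions; here the
paper's `n` is `n+1`). -/
theorem relR_iff_increasing_path (n k m : ℕ) (hk : 1 ≤ k) (hm : 1 ≤ m)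
    (w w' : Equiv.Perm (Fin (n + 1))) :
    (RelR (n + 1) k m w w' ↔ (IncPaths (n + 1) k m w w').Nonempty) ∧
      (∀ x ∈ IncPaths (n + 1) k m w w', ∀ y ∈ IncPaths (n + 1) k m w w', x = y) := by
  refine ⟨⟨incPath_of_relR, fun h => relR_of_incPath h.choose_spec⟩, ?_⟩
  intro x hx y hy
  exact incPath_unique m w' x y hx hy

end SchubertPieri
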